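/- arXiv:math/9807192 — 3 statements merged into one kernel-verified Lean document; each statement's English description precedes it below -/
import Mathlib

section
/- For k ≠ 0 and k4 = √(−k·k3) with k·k3 < 0, the function h(z) = −k4·tan(k4(z + k2))/k satisfies the ODE h'' + 2k·h·h' = 0 at every point z where cos(k4(z + k2)) ≠ 0. -/
/-! The function `h` solves the Riccati equation `h' = -k4² / k - k h²`, because `tan' = 1 + tan²`;
differentiating a Riccati equation `h' = α + β h²` once more gives `h'' = 2 β h h'`. -/

open Real Filter Topology

theorem Real.hasDerivAt_tan_mul_add (a b : ℝ) {x : ℝ} (hx : cos (a * (x + b)) ≠ 0) :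
    HasDerivAt (fun y => tan (a * (y + b))) ((1 + tan (a * (x + b)) ^ 2) * a) x := by
  have hu : HasDerivAt (fun y => a * (y + b)) a x := by
    simpa using ((hasDerivAt_id x).add_const b).const_mul a
  have htan := (hasDerivAt_tan hx).comp x hu
  rwa [one_div, ← inv_one_add_tan_sq hx, inv_inv] at htan

theorem hasDerivAt_deriv_of_riccati {f : ℝ → ℝ} {α β x : ℝ}
    (hf : ∀ᶠ y in 𝓝 x, HasDerivAt f (α + β * f y ^ 2) y) :
    HasDerivAt (deriv f) (2 * β * f x * deriv f x) x := by
  have hfx := hf.self_of_nhds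
  have hderiv : deriv f =ᶠ[𝓝 x] fun y => α + β * f y ^ 2 := hf.mono fun y hy => hy.deriv
  have hrhs : HasDerivAt (fun y => α + β * f y ^ 2) (β * (2 * f x * deriv f x)) x := by
    simpa [hfx.deriv] using ((hfx.pow 2).const_mul β).const_add α
  exact (hrhs.congr_of_eventuallyEq hderiv).congr_deriv (by ring)

theorem stmt2_general (k k2 : ℝ) (hk : k ≠ 0)
    (k4 : ℝ)
    (h : ℝ → ℝ) (hh : ∀ z, h z = -(k4 * Real.tan (k4 * (z + k2))) / k) :
    ∀ z : ℝ, Real.cos (k4 * (z + k2)) ≠ 0 →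
      deriv (deriv h) z + 2 * k * h z * deriv h z = 0 := by
  intro z hz
  have hcos : ∀ᶠ y in 𝓝 z, cos (k4 * (y + k2)) ≠ 0 :=
    (by fun_prop : Continuous fun y => cos (k4 * (y + k2))).continuousAt.eventually_ne hz
  have hriccati : ∀ᶠ y in 𝓝 z, HasDerivAt h (-k4 ^ 2 / k + -k * h y ^ 2) y := by
    filter_upwards [hcos] with y hy
    rw [hh y, funext hh]
    refine ((hasDerivAt_tan_mul_add k4 k2 hy).const_mul k4).neg.div_const k |>.congr_deriv ?_
    field_simp
    ring
  rw [(hasDerivAt_deriv_of_riccati hriccati).deriv]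
  ring

/-- For k ≠ 0 and k4 = √(−k·k3) with k·k3 < 0, the function
h(z) = −k4·tan(k4(z + k2))/k satisfies h'' + 2k·h·h' = 0 at every z where
cos(k4(z + k2)) ≠ 0. -/
theorem stmt2 (k k2 k3 : ℝ) (hk : k ≠ 0) (hkk3 : k * k3 < 0)
    (k4 : ℝ) (hk4 : k4 = Real.sqrt (-(k * k3)))
    (h : ℝ → ℝ) (hh : ∀ z, h z = -(k4 * Real.tan (k4 * (z + k2))) / k) :
    ∀ z : ℝ, Real.cos (k4 * (z + k2)) ≠ 0 →
      deriv (deriv h) z + 2 * k * h z * deriv h z = 0 :=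
  stmt2_general k k2 hk k4 h hh
end

section
/- The function u(x,t) = (c·e^{2at}/x² − a(n−1)/(2n))^{1/(n−1)} · x^{2/(n−1)} is a solution of the PDE u_t = (u^n)_{xx} + (C/x)(u^n)_x with C = −(n+1)/(n−1), on any region where x > 0 and c·e^{2at}/x² − a(n−1)/(2n) > 0. -/
/-!
For `x > 0` put `b = a(n-1)/(2n)` and `P = c e^{2at} - b x²`. Absorbing `x^{2/(n-1)}` into the
base gives `u = P^{1/(n-1)}`, so `u^n = P^{n/(n-1)}` and, as `2bn/(n-1) = a`, `(u^n)_x = -a x u`.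
Hence `(u^n)_xx + (C/x)(u^n)_x = -a(1 + C) u - a x u_x = (2a/(n-1)) (P + b x²) P^{1/(n-1) - 1}`,
which is `u_t` because `P + b x² = c e^{2at}`.
-/

open Real Filter Topology

lemma div_sq_rpow_mul_rpow_two_mul {h y : ℝ} (hh : 0 ≤ h) (hy : 0 < y) (p : ℝ) :
    (h / y ^ 2) ^ p * y ^ (2 * p) = h ^ p := by
  have hyp : 0 < (y ^ 2) ^ p := rpow_pos_of_pos (by positivity) p
  rw [div_rpow hh (sq_nonneg y), rpow_mul hy.le, rpow_two, div_mul_cancel₀ _ hyp.ne']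

noncomputable def radialPressure (n a c x t : ℝ) : ℝ :=
  c * exp (2 * a * t) - a * (n - 1) / (2 * n) * x ^ 2

noncomputable def radialProfile (n a c x t : ℝ) : ℝ :=
  radialPressure n a c x t ^ (1 / (n - 1))

section

variable {n a c x t : ℝ}

lemma radialPressure_eventually_pos_space (h : 0 < radialPressure n a c x t) :
    ∀ᶠ y in 𝓝 x, 0 < radialPressure n a c y t :=
  (isOpen_lt continuous_const (by unfold radialPressure; fun_prop)).mem_nhds h

lemma radialPressure_eventually_pos_time (h : 0 < radialPressure n a c x t) :
    ∀ᶠ s in 𝓝 t, 0 < radialPressure n a c x s :=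
  (isOpen_lt continuous_const (by unfold radialPressure; fun_prop)).mem_nhds h

lemma hasDerivAt_radialPressure_rpow (h : 0 < radialPressure n a c x t) (q : ℝ) :
    HasDerivAt (fun y => radialPressure n a c y t ^ q)
      (-2 * (a * (n - 1) / (2 * n)) * q * x * radialPressure n a c x t ^ (q - 1)) x := by
  have hsq : HasDerivAt (fun y => radialPressure n a c y t)
      (-(a * (n - 1) / (2 * n) * (2 * x))) x := by
    simpa [radialPressure] using
      ((hasDerivAt_pow 2 x).const_mul (a * (n - 1) / (2 * n))).const_sub _
  exact (hsq.rpow_const (Or.inl h.ne')).congr_deriv (by ring)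

lemma div_sq_rpow_mul_rpow_eq_radialProfile (hx : 0 < x) (h : 0 ≤ radialPressure n a c x t) :
    (c * exp (2 * a * t) / x ^ 2 - a * (n - 1) / (2 * n)) ^ ((1 : ℝ) / (n - 1))
      * x ^ ((2 : ℝ) / (n - 1)) = radialProfile n a c x t := by
  have hbase : c * exp (2 * a * t) / x ^ 2 - a * (n - 1) / (2 * n) =
      radialPressure n a c x t / x ^ 2 := by
    unfold radialPressure
    field_simp
  rw [hbase, show (2 : ℝ) / (n - 1) = 2 * (1 / (n - 1)) by ring,
    div_sq_rpow_mul_rpow_two_mul h hx, radialProfile]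

lemma radialProfile_rpow_self (hn1 : n ≠ 1) (h : 0 ≤ radialPressure n a c x t) :
    radialProfile n a c x t ^ n = radialPressure n a c x t ^ (1 / (n - 1) + 1) := by
  have : n - 1 ≠ 0 := sub_ne_zero.mpr hn1
  rw [radialProfile, ← rpow_mul h]
  congr 1
  field_simp
  ring

lemma hasDerivAt_radialProfile_time (h : 0 < radialPressure n a c x t) :
    HasDerivAt (fun s => radialProfile n a c x s)
      (2 * a * c * exp (2 * a * t) / (n - 1) * radialPressure n a c x t ^ (1 / (n - 1) - 1)) t := by
  have hexp : HasDerivAt (fun s => radialPressure n a c x s) (c * (exp (2 * a * t) * (2 * a))) t :=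
    ((((hasDerivAt_id t).const_mul (2 * a)).exp.congr_deriv (by simp)).const_mul c).sub_const _
  exact (hexp.rpow_const (Or.inl h.ne')).congr_deriv (by ring)

lemma hasDerivAt_radialProfile_rpow_self (hn0 : n ≠ 0) (hn1 : n ≠ 1)
    (h : 0 < radialPressure n a c x t) :
    HasDerivAt (fun y => radialProfile n a c y t ^ n)
      (-a * x * radialPressure n a c x t ^ (1 / (n - 1))) x := by
  have : n - 1 ≠ 0 := sub_ne_zero.mpr hn1
  refine (hasDerivAt_radialPressure_rpow h (1 / (n - 1) + 1)).congr_of_eventuallyEq ?_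
    |>.congr_deriv ?_
  · filter_upwards [radialPressure_eventually_pos_space h] with y hy
      using radialProfile_rpow_self hn1 hy.le
  · rw [add_sub_cancel_right]
    field_simp
    ring

theorem radialProfile_pde (hn0 : n ≠ 0) (hn1 : n ≠ 1) (hx : x ≠ 0)
    (h : 0 < radialPressure n a c x t) :
    deriv (fun s => radialProfile n a c x s) t =
      deriv (fun y => deriv (fun y' => radialProfile n a c y' t ^ n) y) x +
        (-((n + 1) / (n - 1)) / x) * deriv (fun y => radialProfile n a c y t ^ n) x := by
  have : n - 1 ≠ 0 := sub_ne_zero.mpr hn1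
  have hflux : deriv (fun y => radialProfile n a c y t ^ n) =ᶠ[𝓝 x]
      fun y => -a * y * radialPressure n a c y t ^ (1 / (n - 1)) := by
    filter_upwards [radialPressure_eventually_pos_space h] with y hy
      using (hasDerivAt_radialProfile_rpow_self hn0 hn1 hy).deriv
  have hflux_deriv : HasDerivAt (fun y => -a * y * radialPressure n a c y t ^ (1 / (n - 1)))
      (-a * radialPressure n a c x t ^ (1 / (n - 1)) + -a * x * (-2 * (a * (n - 1) / (2 * n)) *
        (1 / (n - 1)) * x * radialPressure n a c x t ^ (1 / (n - 1) - 1))) x :=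
    ((hasDerivAt_id' x).const_mul (-a)).mul (hasDerivAt_radialPressure_rpow h _)
      |>.congr_deriv (by ring)
  have hpow : radialPressure n a c x t ^ (1 / (n - 1)) =
      radialPressure n a c x t ^ (1 / (n - 1) - 1) * radialPressure n a c x t := by
    rw [← rpow_add_one h.ne', sub_add_cancel]
  rw [(hasDerivAt_radialProfile_time h).deriv, hflux.deriv_eq, hflux_deriv.deriv,
    (hasDerivAt_radialProfile_rpow_self hn0 hn1 h).deriv, hpow]
  generalize radialPressure n a c x t ^ (1 / (n - 1) - 1) = F
  unfold radialPressure
  field_simp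
  ring

end

/-- u(x,t) = (c·e^{2at}/x² − a(n−1)/(2n))^{1/(n−1)} · x^{2/(n−1)}
solves u_t = (u^n)_{xx} + (C/x)(u^n)_x with C = −(n+1)/(n−1), on x > 0 where the
base is positive. -/
theorem stmt3 (n a c C : ℝ) (hn0 : n ≠ 0) (hn1 : n ≠ 1)
    (hC : C = -((n + 1) / (n - 1)))
    (u : ℝ → ℝ → ℝ)
    (hu : ∀ x t, u x t =
      (c * Real.exp (2 * a * t) / x ^ 2 - a * (n - 1) / (2 * n)) ^ ((1 : ℝ) / (n - 1))
        * x ^ ((2 : ℝ) / (n - 1))) :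
    ∀ x t : ℝ, x > 0 →
      c * Real.exp (2 * a * t) / x ^ 2 - a * (n - 1) / (2 * n) > 0 →
      deriv (fun s => u x s) t =
        deriv (fun y => deriv (fun y' => (u y' t) ^ n) y) x +
        (C / x) * deriv (fun y => (u y t) ^ n) x := by
  intro x t hx hg
  have hpos : 0 < radialPressure n a c x t := by
    have := mul_pos hg (pow_pos hx 2)
    rwa [sub_mul, div_mul_cancel₀ _ (pow_pos hx 2).ne'] at this
  have hu_time : (fun s => u x s) =ᶠ[𝓝 t] fun s => radialProfile n a c x s := by
    filter_upwards [radialPressure_eventually_pos_time hpos] with s hs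
    rw [hu, div_sq_rpow_mul_rpow_eq_radialProfile hx hs.le]
  have hu_space : (fun y => u y t ^ n) =ᶠ[𝓝 x] fun y => radialProfile n a c y t ^ n := by
    filter_upwards [radialPressure_eventually_pos_space hpos, Ioi_mem_nhds hx] with y hy hy0
    rw [hu, div_sq_rpow_mul_rpow_eq_radialProfile hy0 hy.le]
  rw [hu_time.deriv_eq, hu_space.deriv_eq, hu_space.deriv.deriv_eq, hC]
  exact radialProfile_pde hn0 hn1 hx.ne' hpos
end

section
/- Let n ∉ {0,1}, a = 2 − 2n, and let y(z) satisfy the first integral equation y' + (C/(2n) − 1 − 1/(2n))·y/z + y^{1/n}/(4n²) = 0 on z > 0 with y > 0. Then y satisfies the second-order ODE y'' − y'·[(C₁+n+a−1)/((a−2)(n−1)z) − y^{1/n−1}/((a−2)²n)] + a·n(C₁−n+1)·y/((a−2)²(n−1)²z²) = 0, where C₁ = Cn + an − C. -/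
/-!
The first integral is a Bernoulli equation `y' = -(k y / z + y^{1/n} / (4n²))` with
`k = C/(2n) - 1 - 1/(2n)`. Its right-hand side is differentiable wherever `y` is, so
differentiating it gives `y''` in terms of `y`, `y'` and `y^{1/n}`; eliminating `y'` once more
with the first integral and writing `y^{1/n - 1} = y^{1/n} / y`, the second-order equation
becomes a rational identity in `y`, `y^{1/n}`, `z`, `n`, `C`.
-/

open Filter Topology

theorem deriv_deriv_eq_of_bernoulli {y : ℝ → ℝ} {k p d z : ℝ} (hz : 0 < z) (hyz : y z ≠ 0)
    (hy : DifferentiableAt ℝ y z)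
    (hode : ∀ t > 0, deriv y t + k * y t / t + y t ^ p / d = 0) :
    deriv (deriv y) z
      = -(k * (deriv y z * z - y z) / z ^ 2 + deriv y z * p * y z ^ (p - 1) / d) := by
  have hrhs : HasDerivAt (fun t => -(k * y t / t + y t ^ p / d))
      (-(k * (deriv y z * z - y z) / z ^ 2 + deriv y z * p * y z ^ (p - 1) / d)) z := by
    have hy' := hy.hasDerivAt
    exact (((hy'.const_mul k).div (hasDerivAt_id' z) hz.ne').add
      ((hy'.rpow_const (Or.inl hyz)).div_const d)).neg.congr_deriv (by ring)
  have heq : deriv y =ᶠ[𝓝 z] fun t => -(k * y t / t + y t ^ p / d) := by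
    filter_upwards [eventually_gt_nhds hz] with t ht
    linarith [hode t ht]
  rw [heq.deriv_eq]
  exact hrhs.deriv

theorem secondOrder_of_firstIntegral_identity {n C a C₁ y y' y'' w z : ℝ} (hn0 : n ≠ 0)
    (hn1 : n ≠ 1) (ha : a = 2 - 2 * n) (hC₁ : C₁ = C * n + a * n - C) (hy : y ≠ 0) (hz : z ≠ 0)
    (hy' : y' + (C / (2 * n) - 1 - 1 / (2 * n)) * y / z + w / (4 * n ^ 2) = 0)
    (hy'' : y'' = -((C / (2 * n) - 1 - 1 / (2 * n)) * (y' * z - y) / z ^ 2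
      + y' * (1 / n) * (w / y) / (4 * n ^ 2))) :
    y'' - y' * ((C₁ + n + a - 1) / ((a - 2) * (n - 1) * z) - w / y / ((a - 2) ^ 2 * n))
      + a * n * (C₁ - n + 1) * y / ((a - 2) ^ 2 * (n - 1) ^ 2 * z ^ 2) = 0 := by
  subst ha hC₁ hy''
  have hy'_eq : y' = -((C / (2 * n) - 1 - 1 / (2 * n)) * y / z + w / (4 * n ^ 2)) := by
    linarith
  have hn1' : n - 1 ≠ 0 := sub_ne_zero.mpr hn1
  rw [hy'_eq, show (2 - 2 * n) - 2 = -(2 * n) by ring]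
  field_simp
  ring

theorem stmt10_general (n C a C₁ : ℝ) (hn0 : n ≠ 0) (hn1 : n ≠ 1)
    (ha : a = 2 - 2 * n) (hC₁ : C₁ = C * n + a * n - C)
    (y : ℝ → ℝ)
    (hypos : ∀ z : ℝ, z > 0 → y z > 0)
    (hdiff : ∀ z : ℝ, z > 0 → DifferentiableAt ℝ y z)
    (hfi : ∀ z : ℝ, z > 0 →
      deriv y z + (C / (2 * n) - 1 - 1 / (2 * n)) * y z / z
        + (y z) ^ ((1 : ℝ) / n) / (4 * n ^ 2) = 0) :
    ∀ z : ℝ, z > 0 →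
      deriv (deriv y) z
        - deriv y z * ((C₁ + n + a - 1) / ((a - 2) * (n - 1) * z)
            - (y z) ^ ((1 : ℝ) / n - 1) / ((a - 2) ^ 2 * n))
        + a * n * (C₁ - n + 1) * y z / ((a - 2) ^ 2 * (n - 1) ^ 2 * z ^ 2) = 0 := by
  intro z hz
  have hyz := hypos z hz
  have hpow : y z ^ ((1 : ℝ) / n - 1) = y z ^ ((1 : ℝ) / n) / y z := by
    rw [Real.rpow_sub hyz, Real.rpow_one]
  rw [hpow]
  refine secondOrder_of_firstIntegral_identity hn0 hn1 ha hC₁ hyz.ne' hz.ne' (hfi z hz) ?_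
  rw [deriv_deriv_eq_of_bernoulli hz hyz.ne' (hdiff z hz) hfi, hpow]

/-- for n ∉ {0,1}, a = 2−2n, C₁ = Cn+an−C, if y > 0 on (0,∞) is twice
differentiable and satisfies the first integral
y' + (C/(2n) − 1 − 1/(2n))·y/z + y^{1/n}/(4n²) = 0, then y satisfies
y'' − y'·[(C₁+n+a−1)/((a−2)(n−1)z) − y^{1/n−1}/((a−2)²n)]
  + a·n(C₁−n+1)·y/((a−2)²(n−1)²z²) = 0. -/
theorem stmt10 (n C a C₁ : ℝ) (hn0 : n ≠ 0) (hn1 : n ≠ 1)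
    (ha : a = 2 - 2 * n) (hC₁ : C₁ = C * n + a * n - C)
    (y : ℝ → ℝ)
    (hypos : ∀ z : ℝ, z > 0 → y z > 0)
    (hdiff : ∀ z : ℝ, z > 0 → DifferentiableAt ℝ y z)
    (hdiff2 : ∀ z : ℝ, z > 0 → DifferentiableAt ℝ (deriv y) z)
    (hfi : ∀ z : ℝ, z > 0 →
      deriv y z + (C / (2 * n) - 1 - 1 / (2 * n)) * y z / z
        + (y z) ^ ((1 : ℝ) / n) / (4 * n ^ 2) = 0) :
    ∀ z : ℝ, z > 0 →
      deriv (deriv y) z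
        - deriv y z * ((C₁ + n + a - 1) / ((a - 2) * (n - 1) * z)
            - (y z) ^ ((1 : ℝ) / n - 1) / ((a - 2) ^ 2 * n))
        + a * n * (C₁ - n + 1) * y z / ((a - 2) ^ 2 * (n - 1) ^ 2 * z ^ 2) = 0 :=
  stmt10_general n C a C₁ hn0 hn1 ha hC₁ y hypos hdiff hfi
end
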